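/- arXiv:2603.16621 — 3 statements merged into one kernel-verified Lean document; each statement's English description precedes it below -/
import Mathlib

section
/- Let K ≥ 2, D := K − 1, and let m^(1), …, m^(K) be points in ℝ^D with minimum pairwise Euclidean distance δ := min_{k≠ℓ} ‖m^(k) − m^(ℓ)‖ > 0. For each k let V_k := {z ∈ ℝ^D : ‖z − m^(k)‖ ≤ ‖z − m^(ℓ)‖ for all ℓ} be the Voronoi cell of m^(k). Fix ε ∈ (0,1) with ε/D < 1/2, and let Z be a random vector in ℝ^D whose coordinates are independent with Z_i ∼ N(m^(k)_i, σ²) for some σ > 0 (i.e. Z has law the product Gaussian with mean m^(k) and covariance σ²I_D). If σ ≤ δ / (2 Φ⁻¹(1 − ε/D)), then P(Z ∉ V_k) ≤ ε. -/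
open MeasureTheory ProbabilityTheory
open scoped NNReal

/-- The cumulative distribution function Φ of the standard normal distribution. -/
noncomputable def stdNormalCDF (x : ℝ) : ℝ :=
  ((gaussianReal 0 1) (Set.Iic x)).toReal

/-- The quantile function Φ⁻¹ of the standard normal distribution (inverse of Φ). -/
noncomputable def stdNormalQuantile : ℝ → ℝ :=
  Function.invFun stdNormalCDF

/-- The product Gaussian measure on `EuclideanSpace ℝ (Fin D)` with mean `m` and
covariance `v • I_D`: the product measure whose `i`-th factor is `N(m i, v)`. -/
noncomputable def gaussianPi {D : ℕ} (m : EuclideanSpace ℝ (Fin D)) (v : ℝ≥0) :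
    Measure (EuclideanSpace ℝ (Fin D)) :=
  (Measure.pi fun i => gaussianReal (m i) v).map
    (MeasurableEquiv.toLp 2 (Fin D → ℝ))

/-! A point leaves the Voronoi cell of `m k` only if it is strictly closer to some `m l`, `l ≠ k`,
i.e. lies in the open half-space `⟪u, z⟫ > ⟪u, m k⟫ + ‖u‖² / 2` with `u = m l - m k`. Under
`N(m k, σ² I)` the linear form `⟪u, ·⟫` has law `N(⟪u, m k⟫, ‖u‖² σ²)` (compare characteristic
functions), so this half-space has probability `1 - Φ(‖u‖ / 2σ) ≤ 1 - Φ(δ / 2σ)`, and the bound on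
`σ` makes this at most `1 - Φ(Φ⁻¹(1 - ε/D)) = ε / D`. A union bound over the `D = K - 1` other
centres gives `ε`. -/

open Set Filter
open scoped RealInnerProductSpace

namespace ProbabilityTheory

lemma continuous_cdf (μ : Measure ℝ) [IsProbabilityMeasure μ] [NullSingletonClass μ] :
    Continuous (cdf μ) := by
  refine continuous_iff_continuousAt.2 fun x ↦ ?_
  have hjump : ENNReal.ofReal (cdf μ x - Function.leftLim (cdf μ) x) = 0 := by
    rw [← StieltjesFunction.measure_singleton, measure_cdf, measure_singleton]
  have hle := (monotone_cdf μ).leftLim_le (le_refl x)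
  rw [(monotone_cdf μ).continuousAt_iff_leftLim_eq_rightLim, StieltjesFunction.rightLim_eq]
  linarith [ENNReal.ofReal_eq_zero.1 hjump]

lemma mem_range_cdf (μ : Measure ℝ) [IsProbabilityMeasure μ] [NullSingletonClass μ] {p : ℝ}
    (hp : p ∈ Ioo 0 1) : p ∈ range (cdf μ) :=
  mem_range_of_exists_le_of_exists_ge (continuous_cdf μ)
    ((tendsto_cdf_atBot μ).eventually (eventually_le_nhds hp.1)).exists
    ((tendsto_cdf_atTop μ).eventually (eventually_ge_nhds hp.2)).exists

end ProbabilityTheory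

lemma stdNormalCDF_eq_cdf : stdNormalCDF = cdf (gaussianReal 0 1) := by
  ext x
  rw [cdf_eq_real, stdNormalCDF, measureReal_def]

lemma monotone_stdNormalCDF : Monotone stdNormalCDF :=
  stdNormalCDF_eq_cdf ▸ monotone_cdf _

lemma stdNormalCDF_stdNormalQuantile {p : ℝ} (hp : p ∈ Ioo 0 1) :
    stdNormalCDF (stdNormalQuantile p) = p :=
  have := nullSingletonClass_gaussianReal (μ := 0) one_ne_zero
  Function.invFun_eq (stdNormalCDF_eq_cdf ▸ mem_range_cdf _ hp)

lemma gaussianReal_map_add_mul_sqrt (μ : ℝ) (v : ℝ≥0) :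
    (gaussianReal 0 1).map (fun x ↦ μ + √v * x) = gaussianReal μ v := by
  have hcomp : (fun x ↦ μ + √v * x) = (μ + ·) ∘ (√v * ·) := rfl
  rw [hcomp, ← Measure.map_map (measurable_const_add μ) (measurable_const_mul _),
    gaussianReal_map_const_mul, gaussianReal_map_const_add]
  congr
  · simp
  · ext; simp [Real.sq_sqrt v.coe_nonneg]

lemma gaussianReal_Ioi_add_mul_sqrt (μ t : ℝ) {v : ℝ≥0} (hv : v ≠ 0) :
    gaussianReal μ v (Ioi (μ + √v * t)) = ENNReal.ofReal (1 - stdNormalCDF t) := by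
  have hsqrt : 0 < √(v : ℝ) := Real.sqrt_pos.2 (by positivity)
  have hpre : (fun x ↦ μ + √v * x) ⁻¹' Ioi (μ + √v * t) = (Iic t)ᶜ := by
    ext x; simp [mul_lt_mul_iff_right₀ hsqrt]
  rw [← gaussianReal_map_add_mul_sqrt, Measure.map_apply (by fun_prop) measurableSet_Ioi, hpre,
    prob_compl_eq_one_sub measurableSet_Iic, ← ofReal_cdf, ← stdNormalCDF_eq_cdf,
    ← ENNReal.ofReal_one, ENNReal.ofReal_sub _ (stdNormalCDF_eq_cdf ▸ cdf_nonneg _ _)]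

lemma charFun_map_inner {E : Type*} [NormedAddCommGroup E] [InnerProductSpace ℝ E]
    [MeasurableSpace E] [OpensMeasurableSpace E] (μ : Measure E) (u : E) (s : ℝ) :
    charFun (μ.map (⟪u, ·⟫)) s = charFun μ (s • u) := by
  rw [charFun_apply, integral_map (by fun_prop) (by fun_prop), charFun_apply]
  simp_rw [inner_smul_right, real_inner_comm u, RCLike.inner_apply, conj_trivial]

instance isProbabilityMeasure_gaussianPi {D : ℕ} (m : EuclideanSpace ℝ (Fin D)) (v : ℝ≥0) :
    IsProbabilityMeasure (gaussianPi m v) :=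
  Measure.isProbabilityMeasure_map (by fun_prop)

lemma charFun_gaussianPi {D : ℕ} (m t : EuclideanSpace ℝ (Fin D)) (v : ℝ≥0) :
    charFun (gaussianPi m v) t = Complex.exp (⟪t, m⟫ * Complex.I - v * ‖t‖ ^ 2 / 2) := by
  rw [gaussianPi, MeasurableEquiv.coe_toLp, charFun_pi]
  simp_rw [charFun_gaussianReal, ← Complex.exp_sum, ← Complex.ofReal_pow,
    EuclideanSpace.real_norm_sq_eq, PiLp.inner_apply, RCLike.inner_apply, conj_trivial]
  push_cast
  rw [Finset.sum_sub_distrib, Finset.sum_mul, Finset.mul_sum, Finset.sum_div]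
  simp_rw [mul_comm (m _ : ℂ)]

lemma gaussianPi_map_inner {D : ℕ} (m u : EuclideanSpace ℝ (Fin D)) (v : ℝ≥0) :
    (gaussianPi m v).map (⟪u, ·⟫) = gaussianReal ⟪u, m⟫ (‖u‖₊ ^ 2 * v) := by
  refine Measure.ext_of_charFun (funext fun s ↦ ?_)
  rw [charFun_map_inner, charFun_gaussianPi, charFun_gaussianReal, real_inner_smul_left,
    norm_smul, Real.norm_eq_abs, ← Complex.ofReal_pow, mul_pow, sq_abs, real_inner_comm m u]
  push_cast
  congr 1
  ring

lemma dist_lt_dist_iff_inner {E : Type*} [NormedAddCommGroup E] [InnerProductSpace ℝ E]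
    (a b z : E) : dist z b < dist z a ↔ ⟪b - a, a⟫ + ‖b - a‖ ^ 2 / 2 < ⟪b - a, z⟫ := by
  have hexpand : ‖z - b‖ ^ 2 = ‖z - a‖ ^ 2 - 2 * ⟪b - a, z - a⟫ + ‖b - a‖ ^ 2 := by
    rw [real_inner_comm, ← norm_sub_sq_real, sub_sub_sub_cancel_right]
  rw [dist_eq_norm, dist_eq_norm, ← sq_lt_sq₀ (norm_nonneg _) (norm_nonneg _), hexpand,
    inner_sub_right]
  constructor <;> intro h <;> linarith

lemma gaussianPi_dist_lt_dist {D : ℕ} {a b : EuclideanSpace ℝ (Fin D)} (hab : a ≠ b) {σ : ℝ}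
    (hσ : 0 < σ) :
    gaussianPi a (σ ^ 2).toNNReal {z | dist z b < dist z a}
      = ENNReal.ofReal (1 - stdNormalCDF (dist a b / (2 * σ))) := by
  have hvar : ‖b - a‖₊ ^ 2 * (σ ^ 2).toNNReal ≠ 0 := by
    simp [hσ.ne', hab.symm, sub_eq_zero]
  have hsqrt : √((‖b - a‖₊ ^ 2 * (σ ^ 2).toNNReal : ℝ≥0) : ℝ) = ‖b - a‖ * σ := by
    push_cast
    rw [Real.coe_toNNReal _ (sq_nonneg σ), ← mul_pow, Real.sqrt_sq (by positivity)]
  have hevent : {z | dist z b < dist z a} = (⟪b - a, ·⟫) ⁻¹'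
      Ioi (⟪b - a, a⟫ + √((‖b - a‖₊ ^ 2 * (σ ^ 2).toNNReal : ℝ≥0) : ℝ) * (dist a b / (2 * σ))) := by
    ext z
    rw [hsqrt, dist_comm, dist_eq_norm, mem_ofPred_eq, dist_lt_dist_iff_inner, mem_preimage,
      mem_Ioi]
    field_simp
  rw [hevent, ← Measure.map_apply (by fun_prop) measurableSet_Ioi, gaussianPi_map_inner,
    gaussianReal_Ioi_add_mul_sqrt _ _ hvar]

lemma measure_not_forall_dist_le_le {ι X : Type*} [Fintype ι] [DecidableEq ι]
    [PseudoMetricSpace X] [MeasurableSpace X] (μ : Measure X) (m : ι → X) (k : ι) :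
    μ {z | ¬ ∀ l, dist z (m k) ≤ dist z (m l)}
      ≤ ∑ l ∈ Finset.univ.erase k, μ {z | dist z (m l) < dist z (m k)} := by
  refine (measure_mono fun z hz ↦ ?_).trans (measure_biUnion_finset_le _ _)
  obtain ⟨l, hl⟩ := not_forall.1 hz
  have hlk : l ≠ k := by rintro rfl; exact hl le_rfl
  exact mem_biUnion (Finset.mem_erase.2 ⟨hlk, Finset.mem_univ l⟩) (not_le.1 hl)

lemma le_div_two_mul_of_le_div_two_mul {σ δ q : ℝ} (hσ : 0 < σ) (hδ : 0 < δ)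
    (h : σ ≤ δ / (2 * q)) : q ≤ δ / (2 * σ) := by
  rcases le_or_gt q 0 with hq | hq
  · exact hq.trans (by positivity)
  · rw [le_div_iff₀ (by positivity)] at h ⊢
    linarith

theorem gaussian_notMem_voronoi_le_of_sigma_le_general
    (K D : ℕ) (hK : 2 ≤ K) (hD : D = K - 1)
    (m : Fin K → EuclideanSpace ℝ (Fin D)) (δ : ℝ)
    (hδ : IsLeast {d : ℝ | ∃ k l : Fin K, k ≠ l ∧ d = dist (m k) (m l)} δ)
    (hδpos : 0 < δ)
    (ε : ℝ) (hε : ε ∈ Set.Ioo (0 : ℝ) 1)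
    (σ : ℝ) (hσ : 0 < σ)
    (hσle : σ ≤ δ / (2 * stdNormalQuantile (1 - ε / (D : ℝ))))
    (k : Fin K) :
    gaussianPi (m k) ((σ ^ 2).toNNReal)
        {z : EuclideanSpace ℝ (Fin D) |
          z ∉ {z : EuclideanSpace ℝ (Fin D) | ∀ l : Fin K, dist z (m k) ≤ dist z (m l)}}
      ≤ ENNReal.ofReal ε := by
  have hDone : (1 : ℝ) ≤ D := by norm_cast; omega
  have hDpos : (0 : ℝ) < D := by linarith
  have hp : 1 - ε / D ∈ Ioo 0 1 :=
    ⟨by linarith [(div_lt_one hDpos).2 (hε.2.trans_le hDone)], by linarith [div_pos hε.1 hDpos]⟩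
  have hq := le_div_two_mul_of_le_div_two_mul hσ hδpos hσle
  have hpair : ∀ l ∈ Finset.univ.erase k,
      gaussianPi (m k) (σ ^ 2).toNNReal {z | dist z (m l) < dist z (m k)}
        ≤ ENNReal.ofReal (ε / D) := by
    intro l hl
    have hkl : δ ≤ dist (m k) (m l) := hδ.2 ⟨k, l, (Finset.ne_of_mem_erase hl).symm, rfl⟩
    rw [gaussianPi_dist_lt_dist (dist_pos.1 (hδpos.trans_le hkl)) hσ]
    refine ENNReal.ofReal_le_ofReal ?_
    have := monotone_stdNormalCDF (hq.trans (div_le_div_of_nonneg_right hkl (by positivity)))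
    rw [stdNormalCDF_stdNormalQuantile hp] at this
    linarith
  calc _ ≤ _ := measure_not_forall_dist_le_le _ m k
    _ ≤ ∑ l ∈ Finset.univ.erase k, ENNReal.ofReal (ε / D) := Finset.sum_le_sum hpair
    _ = ENNReal.ofReal ε := by
      rw [Finset.sum_const, Finset.card_erase_of_mem (Finset.mem_univ k), Finset.card_univ,
        Fintype.card_fin, ← hD, nsmul_eq_mul, ← ENNReal.ofReal_natCast,
        ← ENNReal.ofReal_mul hDpos.le, mul_div_cancel₀ _ hDpos.ne']

/-- If `σ ≤ δ / (2 Φ⁻¹(1 - ε/D))`, then `P(Z ∉ V_k) ≤ ε` for `Z ∼ N(m k, σ² I_D)`. -/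
theorem gaussian_notMem_voronoi_le_of_sigma_le
    (K D : ℕ) (hK : 2 ≤ K) (hD : D = K - 1)
    (m : Fin K → EuclideanSpace ℝ (Fin D)) (δ : ℝ)
    (hδ : IsLeast {d : ℝ | ∃ k l : Fin K, k ≠ l ∧ d = dist (m k) (m l)} δ)
    (hδpos : 0 < δ)
    (ε : ℝ) (hε : ε ∈ Set.Ioo (0 : ℝ) 1) (hεD : ε / (D : ℝ) < 1 / 2)
    (σ : ℝ) (hσ : 0 < σ)
    (hσle : σ ≤ δ / (2 * stdNormalQuantile (1 - ε / (D : ℝ))))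
    (k : Fin K) :
    gaussianPi (m k) ((σ ^ 2).toNNReal)
        {z : EuclideanSpace ℝ (Fin D) |
          z ∉ {z : EuclideanSpace ℝ (Fin D) | ∀ l : Fin K, dist z (m k) ≤ dist z (m l)}}
      ≤ ENNReal.ofReal ε :=
  gaussian_notMem_voronoi_le_of_sigma_le_general K D hK hD m δ hδ hδpos ε hε σ hσ hσle k
end

section
/- Let D ≥ 1, σ > 0, and let m, m′ ∈ ℝ^D with m ≠ m′. Let Z be a random vector in ℝ^D whose coordinates are independent with Z_i ∼ N(m_i, σ²). Then P(‖Z − m′‖ ≤ ‖Z − m‖) ≤ Φ(−‖m − m′‖ / (2σ)). -/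
open MeasureTheory ProbabilityTheory
open scoped NNReal

/-! Write `Z = m + σ • X` with `X` standard Gaussian. Expanding squares, `‖Z - m'‖ ≤ ‖Z - m‖`
is the half-space `⟪m - m', X⟫ ≤ -‖m - m'‖ ^ 2 / (2σ)`, and `⟪u, X⟫ ∼ N(0, ‖u‖²)` because the
law of a linear functional under the standard Gaussian is centred with variance its squared
norm. So the probability is exactly `Φ(-‖m - m'‖ / (2σ))`. -/

open Real
open scoped ENNReal RealInnerProductSpace

section stdGaussian

variable {E : Type*} [NormedAddCommGroup E] [InnerProductSpace ℝ E] [FiniteDimensional ℝ E]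
  [MeasurableSpace E] [BorelSpace E]

lemma stdGaussian_map_inner (u : E) :
    (stdGaussian E).map (fun x ↦ ⟪u, x⟫) = gaussianReal 0 (‖u‖₊ ^ 2) := by
  have h := IsGaussian.map_eq_gaussianReal (μ := stdGaussian E) (innerSL ℝ u)
  rw [integral_strongDual_stdGaussian, variance_dual_stdGaussian, innerSL_apply_norm] at h
  convert h using 2
  · ext; simp
  · ext; simp

lemma stdGaussian_inner_le_norm_mul {u : E} (hu : u ≠ 0) (t : ℝ) :
    stdGaussian E {x | ⟪u, x⟫ ≤ ‖u‖ * t} = gaussianReal 0 1 (Set.Iic t) := by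
  have hmap : (gaussianReal 0 1).map (‖u‖ * ·) = gaussianReal 0 (‖u‖₊ ^ 2) := by
    rw [gaussianReal_map_const_mul]
    congr 1
    · simp
    · ext; simp
  have hpre : (‖u‖ * ·) ⁻¹' Set.Iic (‖u‖ * t) = Set.Iic t := by
    ext x
    simp [mul_le_mul_iff_right₀ (norm_pos_iff.mpr hu)]
  rw [← hpre, ← Measure.map_apply (by fun_prop) measurableSet_Iic, hmap,
    ← stdGaussian_map_inner, Measure.map_apply (by fun_prop) measurableSet_Iic]
  rfl

end stdGaussian

lemma gaussianReal_eq_map_add_mul (μ : ℝ) (v : ℝ≥0) :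
    gaussianReal μ v = (gaussianReal 0 1).map (fun x ↦ μ + √v * x) := by
  rw [← Function.comp_def (μ + ·) (√v * ·), ← Measure.map_map (by fun_prop) (by fun_prop),
    gaussianReal_map_const_mul, gaussianReal_map_const_add]
  congr 1
  · simp
  · ext; simp

lemma gaussianPi_eq_map_stdGaussian {D : ℕ} (m : EuclideanSpace ℝ (Fin D)) (v : ℝ≥0) :
    gaussianPi m v = (stdGaussian _).map (fun x ↦ m + √v • x) := by
  rw [← map_pi_eq_stdGaussian, Measure.map_map (by fun_prop) (by fun_prop), gaussianPi]
  simp_rw [gaussianReal_eq_map_add_mul (m _) v]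
  rw [← Measure.pi_map_pi (fun _ ↦ by fun_prop), Measure.map_map (by fun_prop) (by fun_prop)]
  rfl

lemma dist_add_smul_le_dist_iff {E : Type*} [NormedAddCommGroup E] [InnerProductSpace ℝ E]
    {σ : ℝ} (hσ : 0 < σ) (m m' x : E) :
    dist (m + σ • x) m' ≤ dist (m + σ • x) m ↔
      ⟪m - m', x⟫ ≤ ‖m - m'‖ * (-‖m - m'‖ / (2 * σ)) := by
  have hsq : dist (m + σ • x) m' ^ 2 =
      dist (m + σ • x) m ^ 2 + 2 * σ * ⟪m - m', x⟫ + ‖m - m'‖ ^ 2 := by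
    rw [dist_eq_norm, dist_eq_norm, add_sub_right_comm, add_comm, norm_add_sq_real,
      add_sub_cancel_left, real_inner_smul_left, real_inner_comm]
    ring
  rw [← sq_le_sq₀ dist_nonneg dist_nonneg, hsq, mul_div_assoc', le_div_iff₀ (by positivity)]
  constructor <;> intro h <;> nlinarith

theorem gaussian_prob_closer_to_other_center_le_general
    (D : ℕ) (σ : ℝ) (hσ : 0 < σ)
    (m m' : EuclideanSpace ℝ (Fin D)) (hne : m ≠ m') :
    gaussianPi m ((σ ^ 2).toNNReal)
        {z : EuclideanSpace ℝ (Fin D) | dist z m' ≤ dist z m}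
      ≤ ENNReal.ofReal (stdNormalCDF (-(dist m m') / (2 * σ))) := by
  refine le_of_eq ?_
  have hA : MeasurableSet {z : EuclideanSpace ℝ (Fin D) | dist z m' ≤ dist z m} :=
    measurableSet_le (by fun_prop) (by fun_prop)
  have hsqrt : √((σ ^ 2).toNNReal : ℝ) = σ := by
    rw [Real.coe_toNNReal _ (sq_nonneg σ), Real.sqrt_sq hσ.le]
  rw [gaussianPi_eq_map_stdGaussian, Measure.map_apply (by fun_prop) hA, hsqrt]
  simp only [Set.preimage_ofPred_eq, dist_add_smul_le_dist_iff hσ, dist_eq_norm m m']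
  rw [stdGaussian_inner_le_norm_mul (sub_ne_zero.mpr hne), stdNormalCDF,
    ENNReal.ofReal_toReal (measure_ne_top _ _)]

/-- For `Z ∼ N(m, σ² I_D)` and `m ≠ m'`,
`P(‖Z − m′‖ ≤ ‖Z − m‖) ≤ Φ(−‖m − m′‖ / (2σ))`. -/
theorem gaussian_prob_closer_to_other_center_le
    (D : ℕ) (hD : 1 ≤ D) (σ : ℝ) (hσ : 0 < σ)
    (m m' : EuclideanSpace ℝ (Fin D)) (hne : m ≠ m') :
    gaussianPi m ((σ ^ 2).toNNReal)
        {z : EuclideanSpace ℝ (Fin D) | dist z m' ≤ dist z m}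
      ≤ ENNReal.ofReal (stdNormalCDF (-(dist m m') / (2 * σ))) :=
  gaussian_prob_closer_to_other_center_le_general D σ hσ m m' hne
end

section
/- Let K ≥ 2, D := K − 1, and let H be a D × K real matrix satisfying HᵀH = I_K − (1/K)𝟙𝟙ᵀ, where 𝟙 ∈ ℝ^K is the all-ones vector. Then for every y in the open probability simplex Δ̊ = {π ∈ ℝ^K : π_i > 0 for all i, Σ_i π_i = 1}, softmax(Hᵀ (H log y)) = y, where softmax(v)_j := exp(v_j) / Σ_{ℓ=1}^K exp(v_ℓ) and log is applied entrywise. -/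
open Matrix

/-- The softmax map on `ℝ^K`: `softmax(v)_j := exp(v_j) / Σ_ℓ exp(v_ℓ)`. -/
noncomputable def softmaxVec {K : ℕ} (v : Fin K → ℝ) : Fin K → ℝ :=
  fun j => Real.exp (v j) / ∑ l, Real.exp (v l)

/-- If `HᵀH = I_K − (1/K)𝟙𝟙ᵀ`, then for every `y` in the open probability simplex,
`softmax(Hᵀ (H log y)) = y`. -/
theorem ilr_right_inverse
    (K D : ℕ) (hK : 2 ≤ K) (hD : D = K - 1)
    (H : Matrix (Fin D) (Fin K) ℝ)
    (hH : Hᵀ * H = 1 - (K : ℝ)⁻¹ • Matrix.of (fun _ _ => (1 : ℝ)))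
    (y : Fin K → ℝ) (hy : ∀ i, 0 < y i) (hys : ∑ i, y i = 1) :
    softmaxVec (Hᵀ.mulVec (H.mulVec fun i => Real.log (y i))) = y := by
  set v : Fin K → ℝ := fun i => Real.log (y i) with hv
  set S : ℝ := ∑ i, v i with hS
  have hmv : Hᵀ.mulVec (H.mulVec v) = fun j => v j - (K : ℝ)⁻¹ * S := by
    rw [Matrix.mulVec_mulVec, hH]
    funext j
    simp [Matrix.mulVec, Matrix.sub_apply, dotProduct, Matrix.one_apply, Matrix.smul_apply,
      Finset.mul_sum, sub_mul, Finset.sum_sub_distrib, hS, mul_comm]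
  rw [hmv]
  funext j
  have hexp : ∀ i : Fin K, Real.exp (v i - (K : ℝ)⁻¹ * S) = y i * Real.exp (-((K : ℝ)⁻¹ * S)) := by
    intro i
    rw [sub_eq_add_neg, Real.exp_add, hv, Real.exp_log (hy i)]
  simp only [softmaxVec, hexp, ← Finset.sum_mul, hys, one_mul]
  rw [mul_div_assoc, div_self (Real.exp_ne_zero _), mul_one]
end
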